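/- arXiv:1306.1660 — 2 statements merged into one kernel-verified Lean document; each statement's English description precedes it below -/
import Mathlib

section
/- The combination of two reflections is a rotation by twice the angle between the reflection normals: for unit vectors a, b of the Euclidean plane and every vector x of the plane, in Cl(2,0) one has ι(b) * ι(a) * ι(x) * ι(a) * ι(b) = ι(R x), where R is the rotation of the plane by the angle 2·θ and θ is the oriented angle from a to b (with respect to the standard orientation of the plane). -/
open scoped RealInnerProductSpace

/-- The quadratic form `Q v = ‖v‖²` on a real inner product space. -/
noncomputable def normSqQF (E : Type*) [NormedAddCommGroup E] [InnerProductSpace ℝ E] :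
    QuadraticForm ℝ E where
  toFun v := ‖v‖ ^ 2
  toFun_smul a v := by
    simp only [norm_smul, mul_pow, Real.norm_eq_abs, sq_abs, smul_eq_mul]; ring
  exists_companion' :=
    ⟨(2 : ℝ) • innerₗ E, fun x y => by
      simp [innerₗ_apply_apply, norm_add_sq_real]; ring⟩

/-- `Cl(2,0)`: the quadratic form on the Euclidean plane. -/
noncomputable def Q₂ : QuadraticForm ℝ (EuclideanSpace ℝ (Fin 2)) :=
  normSqQF (EuclideanSpace ℝ (Fin 2))

noncomputable def ι₂ : EuclideanSpace ℝ (Fin 2) →ₗ[ℝ] CliffordAlgebra Q₂ :=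
  CliffordAlgebra.ι Q₂

/-- standard basis vectors of the plane -/
noncomputable def e₁ : EuclideanSpace ℝ (Fin 2) := EuclideanSpace.single 0 1
noncomputable def e₂ : EuclideanSpace ℝ (Fin 2) := EuclideanSpace.single 1 1


instance : Fact (Module.finrank ℝ (EuclideanSpace ℝ (Fin 2)) = 2) :=
  ⟨finrank_euclideanSpace_fin⟩

/-- The standard orientation of the Euclidean plane. -/
noncomputable def stdOrientation : Orientation ℝ (EuclideanSpace ℝ (Fin 2)) (Fin 2) :=
  (EuclideanSpace.basisFun (Fin 2) ℝ).toBasis.orientation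

/-! The sandwich `u x u` by a unit vector is the reflection `ρ_u` of `x` in the line `ℝ u`.
A reflection reverses the orientation of the plane, so conjugating the rotation by `φ` with it
gives the rotation by `-φ`. The line `ℝ b` is the image of `ℝ a` under the rotation `R` by the
oriented angle `θ` from `a` to `b`, so `ρ_b ρ_a = R ρ_a R⁻¹ ρ_a = R R`, the rotation by `2θ`. -/

lemma polar_normSqQF {E : Type*} [NormedAddCommGroup E] [InnerProductSpace ℝ E] (u x : E) :
    QuadraticMap.polar (normSqQF E) u x = 2 * ⟪u, x⟫ := by
  simp only [QuadraticMap.polar, normSqQF, QuadraticMap.coe_mk, norm_add_sq_real]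
  ring

theorem ι_mul_ι_mul_ι_eq_reflection {E : Type*} [NormedAddCommGroup E] [InnerProductSpace ℝ E]
    {u : E} (hu : ‖u‖ = 1) (x : E) :
    CliffordAlgebra.ι (normSqQF E) u * CliffordAlgebra.ι _ x * CliffordAlgebra.ι _ u =
      CliffordAlgebra.ι _ ((ℝ ∙ u).reflection x) := by
  have hQ : normSqQF E u = 1 := by simp [normSqQF, hu]
  rw [CliffordAlgebra.ι_mul_ι_mul_ι, polar_normSqQF, hQ, Submodule.reflection_apply,
    Submodule.starProjection_unit_singleton ℝ hu, one_smul, mul_smul, two_smul ℕ, two_smul ℝ]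

theorem reflection_span_singleton_map_apply {E F : Type*} [NormedAddCommGroup E]
    [InnerProductSpace ℝ E] [NormedAddCommGroup F] [InnerProductSpace ℝ F]
    (f : E ≃ₗᵢ[ℝ] F) (a : E) (x : F) :
    (ℝ ∙ f a).reflection x = f ((ℝ ∙ a).reflection (f.symm x)) := by
  have hspan : (ℝ ∙ a).map (f.toLinearEquiv : E →ₗ[ℝ] F) = ℝ ∙ f a := by
    rw [Submodule.map_span, Set.image_singleton]
    rfl
  rw [← Submodule.reflection_map_apply]
  simp only [hspan]

namespace Orientation

variable {E : Type*} [NormedAddCommGroup E] [InnerProductSpace ℝ E]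
  [Fact (Module.finrank ℝ E = 2)] (o : Orientation ℝ E (Fin 2))

theorem map_reflection_span_singleton {a : E} (ha : a ≠ 0) :
    Orientation.map (Fin 2) (ℝ ∙ a).reflection.toLinearEquiv o = -o := by
  rw [Orientation.map_eq_neg_iff_det_neg _ _ (by simp [Fact.out (p := Module.finrank ℝ E = 2)])]
  change LinearMap.det (ℝ ∙ a).reflection.toLinearMap < 0
  rw [Submodule.det_reflection, Submodule.finrank_orthogonal_span_singleton (n := 1) ha]
  norm_num

theorem reflection_rotation_reflection {a : E} (ha : a ≠ 0) (θ : Real.Angle) (x : E) :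
    (ℝ ∙ a).reflection (o.rotation θ ((ℝ ∙ a).reflection x)) = o.rotation (-θ) x := by
  rw [← o.rotation_neg_orientation_eq_neg, ← o.map_reflection_span_singleton ha,
    o.rotation_map, Submodule.reflection_symm]

theorem reflection_reflection_eq_rotation {a b : E} (ha : a ≠ 0) (hb : b ≠ 0) (x : E) :
    (ℝ ∙ b).reflection ((ℝ ∙ a).reflection x) = o.rotation ((2 : ℤ) • o.oangle a b) x := by
  -- `r • b` has the direction of `b` and the norm of `a`, so it is `a` rotated by `oangle a b`.
  set r := ‖a‖ / ‖b‖
  have hr : 0 < r := by positivity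
  have hrot : o.rotation (o.oangle a b) a = r • b := by
    rw [← o.oangle_smul_right_of_pos a b hr, o.rotation_oangle_eq_iff_norm_eq, norm_smul,
      Real.norm_of_nonneg hr.le, div_mul_cancel₀ _ (norm_ne_zero_iff.mpr hb)]
  have hspan : ℝ ∙ b = ℝ ∙ o.rotation (o.oangle a b) a := by
    rw [hrot, Submodule.span_singleton_smul_eq hr.ne'.isUnit b]
  simp only [hspan]
  rw [reflection_span_singleton_map_apply, rotation_symm, o.reflection_rotation_reflection ha,
    neg_neg, o.rotation_rotation, two_zsmul]

end Orientation

theorem two_reflections_eq_rotation (a b : EuclideanSpace ℝ (Fin 2))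
    (ha : ‖a‖ = 1) (hb : ‖b‖ = 1) (x : EuclideanSpace ℝ (Fin 2)) :
    ι₂ b * ι₂ a * ι₂ x * ι₂ a * ι₂ b =
      ι₂ (stdOrientation.rotation ((2 : ℤ) • stdOrientation.oangle a b) x) := by
  have ha₀ : a ≠ 0 := norm_ne_zero_iff.mp (by simp [ha])
  have hb₀ : b ≠ 0 := norm_ne_zero_iff.mp (by simp [hb])
  rw [show ι₂ b * ι₂ a * ι₂ x * ι₂ a * ι₂ b = ι₂ b * (ι₂ a * ι₂ x * ι₂ a) * ι₂ b by
    simp only [mul_assoc]]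
  unfold ι₂ Q₂
  rw [ι_mul_ι_mul_ι_eq_reflection ha,
    ι_mul_ι_mul_ι_eq_reflection hb, stdOrientation.reflection_reflection_eq_rotation ha₀ hb₀]
end

section
/- The spin group of Cl(2,0) is exactly the circle of rotors: an element x of Cl(2,0) belongs to Spin(2,0) if and only if there exists φ ∈ ℝ such that x = algebraMap ℝ Cl(2,0) (cos φ) + (sin φ) • (ι(e₁) * ι(e₂)). -/
open scoped RealInnerProductSpace

/-! The bivector `e₁e₂` squares to `-1`, so `i ↦ e₁e₂` embeds `ℂ` into `Cl(2,0)`; since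
`ι u * ι v` corresponds to `conj u * v` (identifying the plane with `ℂ`), the image is exactly the
even subalgebra, and Clifford conjugation becomes complex conjugation. So the even unitary elements
are the images of the unit complex numbers `exp (φ i)`, and each of these is `ι e₁ * ι v` for a unit
vector `v`, hence lies in the Lipschitz group. -/

open scoped ComplexConjugate
open CliffordAlgebra Complex

lemma ι_mem_lipschitzGroup_of_isUnit {R M : Type*} [CommRing R] [AddCommGroup M] [Module R M]
    {Q : QuadraticForm R M} {v : M} (hv : IsUnit (Q v)) :
    ι Q v ∈ (lipschitzGroup Q).toSubmonoid.map (Units.coeHom (CliffordAlgebra Q)) := by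
  let := hv.invertible
  let := invertibleιOfInvertible Q v
  exact ⟨unitOfInvertible (ι Q v), Subgroup.subset_closure ⟨v, rfl⟩, rfl⟩

section normSqQF

variable {E : Type*} [NormedAddCommGroup E] [InnerProductSpace ℝ E]

lemma normSqQF_apply (v : E) : normSqQF E v = ‖v‖ ^ 2 := rfl

lemma normSqQF_isOrtho {v w : E} (h : ⟪v, w⟫ = 0) : (normSqQF E).IsOrtho v w :=
  QuadraticMap.isOrtho_def.mpr <| by
    simpa only [normSqQF_apply, sq] using norm_add_sq_eq_norm_sq_add_norm_sq_real h

lemma ι_mul_self_of_norm_eq_one {v : E} (hv : ‖v‖ = 1) :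
    ι (normSqQF E) v * ι (normSqQF E) v = 1 := by
  rw [ι_sq_scalar, normSqQF_apply, hv, one_pow, map_one]

lemma ι_mul_ι_mul_self_of_orthonormal {u v : E} (hu : ‖u‖ = 1) (hv : ‖v‖ = 1)
    (huv : ⟪u, v⟫ = 0) :
    (ι (normSqQF E) u * ι (normSqQF E) v) * (ι (normSqQF E) u * ι (normSqQF E) v) = -1 := by
  rw [mul_assoc, ι_mul_ι_mul_of_isOrtho _ (normSqQF_isOrtho huv).symm,
    ι_mul_self_of_norm_eq_one hv, mul_one, mul_neg, ι_mul_self_of_norm_eq_one hu]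

end normSqQF

lemma norm_e₁ : ‖e₁‖ = 1 := by simp [e₁]

lemma norm_e₂ : ‖e₂‖ = 1 := by simp [e₂]

lemma inner_e₁_e₂ : ⟪e₁, e₂⟫ = 0 := by simp [e₁, e₂, EuclideanSpace.inner_single_left]

lemma ι₂_e₁_mul_self : ι₂ e₁ * ι₂ e₁ = 1 := ι_mul_self_of_norm_eq_one norm_e₁

lemma ι₂_e₂_mul_self : ι₂ e₂ * ι₂ e₂ = 1 := ι_mul_self_of_norm_eq_one norm_e₂

lemma ι₂_e₂_mul_ι₂_e₁ : ι₂ e₂ * ι₂ e₁ = -(ι₂ e₁ * ι₂ e₂) :=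
  ι_mul_ι_comm_of_isOrtho ((normSqQF_isOrtho inner_e₁_e₂).symm)

noncomputable def complexToCl₂ : ℂ →ₐ[ℝ] CliffordAlgebra Q₂ :=
  Complex.lift ⟨ι₂ e₁ * ι₂ e₂, ι_mul_ι_mul_self_of_orthonormal norm_e₁ norm_e₂ inner_e₁_e₂⟩

lemma complexToCl₂_apply (z : ℂ) :
    complexToCl₂ z = algebraMap ℝ (CliffordAlgebra Q₂) z.re + z.im • (ι₂ e₁ * ι₂ e₂) := rfl

lemma star_complexToCl₂ (z : ℂ) : star (complexToCl₂ z) = complexToCl₂ (conj z) := by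
  rw [complexToCl₂_apply, complexToCl₂_apply, star_add, star_algebraMap,
    CliffordAlgebra.star_smul, star_mul, ι₂, star_ι, star_ι, neg_mul_neg, ← ι₂, ι₂_e₂_mul_ι₂_e₁,
    conj_re, conj_im, smul_neg, neg_smul]

lemma complexToCl₂_mem_unitary_iff {z : ℂ} :
    complexToCl₂ z ∈ unitary (CliffordAlgebra Q₂) ↔ ‖z‖ = 1 := by
  have hinj : Function.Injective complexToCl₂ := complexToCl₂.toRingHom.injective
  rw [Unitary.mem_iff, star_complexToCl₂, ← map_mul, ← map_mul, mul_comm, and_self,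
    map_eq_one_iff _ hinj, mul_conj, ← ofReal_one, ofReal_inj, normSq_eq_norm_sq,
    pow_eq_one_iff_of_nonneg (norm_nonneg z) two_ne_zero]

lemma orthonormalBasisOneI_repr_eq (z : ℂ) :
    orthonormalBasisOneI.repr z = z.re • e₁ + z.im • e₂ := by
  ext i; fin_cases i <;> simp [e₁, e₂]

lemma ι₂_repr_mul_ι₂_repr (z w : ℂ) :
    ι₂ (orthonormalBasisOneI.repr z) * ι₂ (orthonormalBasisOneI.repr w) =
      complexToCl₂ (conj z * w) := by
  simp only [orthonormalBasisOneI_repr_eq, map_add, map_smul, add_mul, mul_add, smul_mul_smul_comm,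
    ι₂_e₁_mul_self, ι₂_e₂_mul_self, ι₂_e₂_mul_ι₂_e₁, complexToCl₂_apply, mul_re, mul_im, conj_re,
    conj_im, Algebra.algebraMap_eq_smul_one]
  module

lemma range_complexToCl₂ : complexToCl₂.range = even Q₂ := by
  apply le_antisymm
  · rw [complexToCl₂, Complex.lift_apply, range_liftAux, Algebra.adjoin_le_iff,
      Set.singleton_subset_iff]
    exact ι_mul_ι_mem_evenOdd_zero Q₂ e₁ e₂
  · intro x hx
    rw [← SetLike.mem_coe, ← Subalgebra.coe_toSubmodule, even_toSubmodule] at hx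
    induction x, hx using even_induction with
    | algebraMap r => exact ⟨r, complexToCl₂.commutes r⟩
    | add x y _ _ hx hy => exact add_mem hx hy
    | ι_mul_ι_mul m₁ m₂ x _ hx =>
      refine mul_mem (complexToCl₂.mem_range.mpr
        ⟨conj (orthonormalBasisOneI.repr.symm m₁) * orthonormalBasisOneI.repr.symm m₂, ?_⟩) hx
      rw [← ι₂_repr_mul_ι₂_repr, LinearIsometryEquiv.apply_symm_apply,
        LinearIsometryEquiv.apply_symm_apply]
      rfl

lemma complexToCl₂_mem_lipschitzGroup {z : ℂ} (hz : ‖z‖ = 1) :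
    complexToCl₂ z ∈ (lipschitzGroup Q₂).toSubmonoid.map (Units.coeHom (CliffordAlgebra Q₂)) := by
  have hunit {w : ℂ} (hw : ‖w‖ = 1) : IsUnit (Q₂ (orthonormalBasisOneI.repr w)) := by
    rw [Q₂, normSqQF_apply, LinearIsometryEquiv.norm_map, hw, one_pow]
    exact isUnit_one
  rw [← one_mul z, ← map_one conj, ← ι₂_repr_mul_ι₂_repr]
  exact mul_mem (ι_mem_lipschitzGroup_of_isUnit (hunit norm_one))
    (ι_mem_lipschitzGroup_of_isUnit (hunit hz))

lemma mem_spinGroup_iff_exists_norm_eq_one {x : CliffordAlgebra Q₂} :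
    x ∈ spinGroup Q₂ ↔ ∃ z : ℂ, ‖z‖ = 1 ∧ complexToCl₂ z = x := by
  rw [spinGroup.mem_iff, pinGroup.mem_iff, ← range_complexToCl₂]
  constructor
  · rintro ⟨⟨-, hunitary⟩, z, rfl⟩
    exact ⟨z, complexToCl₂_mem_unitary_iff.mp hunitary, rfl⟩
  · rintro ⟨z, hz, rfl⟩
    exact ⟨⟨complexToCl₂_mem_lipschitzGroup hz, complexToCl₂_mem_unitary_iff.mpr hz⟩, z, rfl⟩

lemma complexToCl₂_exp_mul_I (φ : ℝ) :
    complexToCl₂ (exp (φ * I)) =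
      algebraMap ℝ (CliffordAlgebra Q₂) (Real.cos φ) + Real.sin φ • (ι₂ e₁ * ι₂ e₂) := by
  rw [complexToCl₂_apply, exp_ofReal_mul_I_re, exp_ofReal_mul_I_im]

theorem mem_spinGroup_iff_rotor (x : CliffordAlgebra Q₂) :
    x ∈ spinGroup Q₂ ↔
      ∃ φ : ℝ, x = algebraMap ℝ (CliffordAlgebra Q₂) (Real.cos φ) +
        Real.sin φ • (ι₂ e₁ * ι₂ e₂) := by
  simp only [mem_spinGroup_iff_exists_norm_eq_one, norm_eq_one_iff]
  constructor
  · rintro ⟨-, ⟨φ, rfl⟩, rfl⟩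
    exact ⟨φ, complexToCl₂_exp_mul_I φ⟩
  · rintro ⟨φ, rfl⟩
    exact ⟨_, ⟨φ, rfl⟩, complexToCl₂_exp_mul_I φ⟩
end
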